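/- arXiv:math/0406156 — 4 statements merged into one kernel-verified Lean document; each statement's English description precedes it below -/
import Mathlib

section
/- If G is a connected graph on n vertices with minimum degree δ ≥ 1, then the diameter of G is at most 3n/δ + 3. -/
open SimpleGraph Finset

private lemma aux_dist_le {V : Type*} {G : SimpleGraph V} (hconn : G.Connected) :
    ∀ {u v : V} (p : G.Walk u v) (i : ℕ), G.dist u (p.getVert i) ≤ i := by
  intro u v p
  induction p with
  | nil =>
    intro i
    rw [SimpleGraph.Walk.getVert_of_length_le _ (Nat.zero_le i)]
    simp [SimpleGraph.dist_self]
  | cons h q ih =>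
    intro i
    cases i with
    | zero => simp [SimpleGraph.dist_self]
    | succ n =>
      rw [SimpleGraph.Walk.getVert_cons_succ]
      calc G.dist _ (q.getVert n) ≤ G.dist _ _ + G.dist _ (q.getVert n) :=
            hconn.dist_triangle
        _ ≤ 1 + n := add_le_add (SimpleGraph.dist_eq_one_iff_adj.mpr h).le (ih n)
        _ = n + 1 := by omega

private lemma aux_dist_ge {V : Type*} {G : SimpleGraph V} :
    ∀ {u v : V} (p : G.Walk u v) (i : ℕ), G.dist (p.getVert i) v ≤ p.length - i := by
  intro u v p
  induction p with
  | nil =>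
    intro i
    rw [SimpleGraph.Walk.getVert_of_length_le _ (Nat.zero_le i)]
    simp [SimpleGraph.dist_self]
  | cons h q ih =>
    intro i
    cases i with
    | zero =>
      simpa using SimpleGraph.dist_le (SimpleGraph.Walk.cons h q)
    | succ n =>
      rw [SimpleGraph.Walk.getVert_cons_succ]
      simpa [SimpleGraph.Walk.length_cons, Nat.succ_sub_succ] using ih n

/-- A connected graph on `n` vertices with minimum degree `δ ≥ 1` has diameter
at most `3n/δ + 3`. -/
theorem diameter_le_of_minDegree {V : Type*} [Fintype V]
    (G : SimpleGraph V) [DecidableRel G.Adj] (hconn : G.Connected)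
    (hδ : 1 ≤ G.minDegree) :
    (G.diam : ℝ) ≤ 3 * (Fintype.card V : ℝ) / (G.minDegree : ℝ) + 3 := by
  classical
  have hne : Nonempty V := hconn.nonempty
  obtain ⟨u, v, huv⟩ := G.exists_dist_eq_diam
  obtain ⟨p, hp⟩ := hconn.exists_walk_length_eq_dist u v
  set d := G.diam with hdd
  set δ := G.minDegree with hδδ
  have hd : p.length = d := by rw [hp, huv]
  have key : ∀ i ≤ d, G.dist u (p.getVert i) = i := by
    intro i hi
    have h1 := aux_dist_le hconn p i
    have h2 := aux_dist_ge p i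
    rw [hd] at h2
    have h3 : d ≤ G.dist u (p.getVert i) + G.dist (p.getVert i) v := by
      rw [← huv]; exact hconn.dist_triangle
    omega
  have hsep : ∀ i j, i ≤ d → j ≤ d → i < j →
      j - i ≤ G.dist (p.getVert i) (p.getVert j) := by
    intro i j hi hj hij
    have h3 : G.dist u (p.getVert j) ≤
        G.dist u (p.getVert i) + G.dist (p.getVert i) (p.getVert j) :=
      hconn.dist_triangle
    rw [key i hi, key j hj] at h3
    omega
  set k := d / 3 with hk
  set S : ℕ → Finset V := fun i =>
    insert (p.getVert (3 * i)) (G.neighborFinset (p.getVert (3 * i))) with hS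
  have hmem : ∀ i w, w ∈ S i → G.dist (p.getVert (3 * i)) w ≤ 1 := by
    intro i w hw
    rw [hS] at hw
    simp only [Finset.mem_insert, SimpleGraph.mem_neighborFinset] at hw
    rcases hw with rfl | hadj
    · simp [SimpleGraph.dist_self]
    · exact (SimpleGraph.dist_eq_one_iff_adj.mpr hadj).le
  have hdle : ∀ i ≤ k, 3 * i ≤ d := by
    intro i hi
    have := Nat.div_mul_le_self d 3
    omega
  have hdist3 : ∀ i j, i ≤ k → j ≤ k → i ≠ j →
      3 ≤ G.dist (p.getVert (3 * i)) (p.getVert (3 * j)) := by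
    intro i j hi hj hij
    rcases Nat.lt_or_ge i j with h | h
    · have := hsep (3 * i) (3 * j) (hdle i hi) (hdle j hj) (by omega)
      omega
    · have hji : j < i := by omega
      have := hsep (3 * j) (3 * i) (hdle j hj) (hdle i hi) (by omega)
      rw [SimpleGraph.dist_comm] at this
      omega
  have hdisj : ∀ i ∈ Finset.range (k + 1), ∀ j ∈ Finset.range (k + 1),
      i ≠ j → Disjoint (S i) (S j) := by
    intro i hi j hj hij
    rw [Finset.mem_range] at hi hj
    rw [Finset.disjoint_left]
    intro w hwi hwj
    have h1 := hmem i w hwi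
    have h2 := hmem j w hwj
    have h3 : G.dist (p.getVert (3 * i)) (p.getVert (3 * j)) ≤
        G.dist (p.getVert (3 * i)) w + G.dist w (p.getVert (3 * j)) :=
      hconn.dist_triangle
    rw [SimpleGraph.dist_comm (u := w)] at h3
    have := hdist3 i j (by omega) (by omega) hij
    omega
  have hcard : ∀ i, δ + 1 ≤ (S i).card := by
    intro i
    rw [hS]
    rw [Finset.card_insert_of_notMem (G.notMem_neighborFinset_self _),
      SimpleGraph.card_neighborFinset_eq_degree]
    have := G.minDegree_le_degree (p.getVert (3 * i))
    omega
  have hcount : (k + 1) * (δ + 1) ≤ Fintype.card V := by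
    calc (k + 1) * (δ + 1)
        = ∑ _i ∈ Finset.range (k + 1), (δ + 1) := by
          rw [Finset.sum_const, Finset.card_range, smul_eq_mul]
      _ ≤ ∑ i ∈ Finset.range (k + 1), (S i).card :=
          Finset.sum_le_sum fun i _ => hcard i
      _ = ((Finset.range (k + 1)).biUnion S).card := (Finset.card_biUnion hdisj).symm
      _ ≤ Fintype.card V := Finset.card_le_univ _
  have hkd : d ≤ 3 * k + 2 := by omega
  have hnat : d * δ ≤ 3 * Fintype.card V := by nlinarith [hcount, hkd, hδ]
  have hδpos : (0 : ℝ) < (δ : ℝ) := by exact_mod_cast hδ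
  have hmain : (d : ℝ) ≤ 3 * (Fintype.card V : ℝ) / (δ : ℝ) := by
    rw [le_div_iff₀ hδpos]
    exact_mod_cast hnat
  linarith
end

section
/- For any connected graphs G and H, the vertex connectivity of the Cartesian product G □ H is at least min{δ(G), δ(H)}, where δ denotes minimum degree. -/
/-!
Let `S` be a vertex set of `G □ H` with `|S| < min δ(G) δ(H)`. Call a column `{x} × β` free if it
misses `S`, and likewise a row `α × {y}`. A free column is a copy of the connected graph `H` inside
`G □ H - S`, and a free row a copy of `G`; any free column meets any free row. Since `|S| < δ(G)`,
the projection of `S` to `α` cannot contain all neighbours of a vertex `a`, so every vertex `(a, b)`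
outside `S` is adjacent to a vertex of a free column, and a free row exists for the same reason.
Hence all of `G □ H - S` is connected to the crossing point of one free column and one free row.
-/

/-- `G` has vertex connectivity at least `k`: every set of vertices whose removal
leaves a graph that is not connected has at least `k` elements. -/
def HasConnectivityAtLeast {V : Type*} (G : SimpleGraph V) (k : ℕ) : Prop :=
  ∀ S : Set V, ¬ (G.induce Sᶜ).Connected → k ≤ S.ncard

namespace SimpleGraph

section Induce

variable {V W : Type*} {G : SimpleGraph V}

theorem exists_adj_notMem_of_ncard_lt_degree {v : V} [Fintype (G.neighborSet v)] {T : Set V}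
    (hT : T.Finite) (h : T.ncard < G.degree v) : ∃ w, G.Adj v w ∧ w ∉ T := by
  rw [← card_neighborSet_eq_degree, ← Nat.card_eq_fintype_card, Nat.card_coe_set_eq] at h
  exact Set.exists_mem_notMem_of_ncard_lt_ncard h hT

theorem Preconnected.reachable_induce_of_forall_mem {G' : SimpleGraph W} (hG' : G'.Preconnected)
    (f : G' →g G) {s : Set V} (hf : ∀ w, f w ∈ s) (a c : W) :
    (G.induce s).Reachable ⟨f a, hf a⟩ ⟨f c, hf c⟩ :=
  (hG' a c).map ({ toFun w := ⟨f w, hf w⟩, map_rel' := f.map_rel' } : G' →g G.induce s)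

end Induce

section BoxProd

variable {α β : Type*} {G : SimpleGraph α} {H : SimpleGraph β} {S : Set (α × β)}

theorem exists_adj_forall_left_notMem [Fintype α] [Fintype β] [DecidableRel G.Adj]
    (hS : S.ncard < G.minDegree) (a : α) : ∃ x, G.Adj a x ∧ ∀ b, (x, b) ∉ S := by
  obtain ⟨x, hax, hx⟩ := G.exists_adj_notMem_of_ncard_lt_degree (S.toFinite.image Prod.fst)
    ((Set.ncard_image_le S.toFinite).trans_lt (hS.trans_le (G.minDegree_le_degree a)))
  exact ⟨x, hax, fun b hb => hx ⟨_, hb, rfl⟩⟩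

theorem exists_adj_forall_right_notMem [Fintype α] [Fintype β] [DecidableRel H.Adj]
    (hS : S.ncard < H.minDegree) (b : β) : ∃ y, H.Adj b y ∧ ∀ a, (a, y) ∉ S := by
  obtain ⟨y, hby, hy⟩ := H.exists_adj_notMem_of_ncard_lt_degree (S.toFinite.image Prod.snd)
    ((Set.ncard_image_le S.toFinite).trans_lt (hS.trans_le (H.minDegree_le_degree b)))
  exact ⟨y, hby, fun a ha => hy ⟨_, ha, rfl⟩⟩

theorem Preconnected.boxProd_induce_reachable_left (hG : G.Preconnected) {y : β}
    (hy : ∀ a, (a, y) ∉ S) (a a' : α) :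
    ((G □ H).induce Sᶜ).Reachable ⟨(a, y), hy a⟩ ⟨(a', y), hy a'⟩ :=
  hG.reachable_induce_of_forall_mem (G.boxProdLeft H y).toHom hy a a'

theorem Preconnected.boxProd_induce_reachable_right (hH : H.Preconnected) {x : α}
    (hx : ∀ b, (x, b) ∉ S) (b b' : β) :
    ((G □ H).induce Sᶜ).Reachable ⟨(x, b), hx b⟩ ⟨(x, b'), hx b'⟩ :=
  hH.reachable_induce_of_forall_mem (G.boxProdRight H x).toHom hx b b'

theorem boxProd_induce_reachable_of_ncard_lt_minDegree [Fintype α] [Fintype β]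
    [DecidableRel G.Adj] (hG : G.Preconnected) (hH : H.Preconnected)
    (hS : S.ncard < G.minDegree) {x₀ : α} {y₀ : β} (hx₀ : ∀ b, (x₀, b) ∉ S)
    (hy₀ : ∀ a, (a, y₀) ∉ S) (u : ↥Sᶜ) :
    ((G □ H).induce Sᶜ).Reachable u ⟨(x₀, y₀), hx₀ y₀⟩ := by
  obtain ⟨⟨a, b⟩, hu⟩ := u
  obtain ⟨x, hax, hx⟩ := exists_adj_forall_left_notMem hS a
  have hstep : ((G □ H).induce Sᶜ).Adj ⟨(a, b), hu⟩ ⟨(x, b), hx b⟩ := by simp [hax]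
  exact hstep.reachable.trans <|
    (hH.boxProd_induce_reachable_right hx b y₀).trans (hG.boxProd_induce_reachable_left hy₀ x x₀)

end BoxProd

end SimpleGraph

open SimpleGraph

/-- The vertex connectivity of the Cartesian (box) product of two connected graphs
is at least the minimum of their minimum degrees. -/
theorem connectivity_boxProd {α β : Type*} [Fintype α] [Fintype β]
    (G : SimpleGraph α) (H : SimpleGraph β)
    [DecidableRel G.Adj] [DecidableRel H.Adj]
    (hG : G.Connected) (hH : H.Connected) :
    HasConnectivityAtLeast (G.boxProd H) (min G.minDegree H.minDegree) := by
  intro S hS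
  by_contra! hlt
  have hSG : S.ncard < G.minDegree := hlt.trans_le (min_le_left _ _)
  have hSH : S.ncard < H.minDegree := hlt.trans_le (min_le_right _ _)
  obtain ⟨x₀, -, hx₀⟩ := exists_adj_forall_left_notMem hSG hG.nonempty.some
  obtain ⟨y₀, -, hy₀⟩ := exists_adj_forall_right_notMem hSH hH.nonempty.some
  refine hS ((connected_iff_exists_forall_reachable _).2 ⟨⟨(x₀, y₀), hx₀ y₀⟩, fun u => ?_⟩)
  exact (boxProd_induce_reachable_of_ncard_lt_minDegree hG.preconnected hH.preconnected hSG
    hx₀ hy₀ u).symm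
end

section
/- If G and H are connected graphs, each on n vertices, with δ = min{δ(G), δ(H)} satisfying δ ≥ 2^{12n/δ + 15}, and if every graph of diameter at most d and connectivity at least 2^{2d+3} has pebbling number equal to its number of vertices (the Czygrinow–Hurlbert–Kierstead–Trotter theorem), then π(G □ H) = n², i.e., G □ H is Class 0, and hence π(G □ H) ≤ π(G)·π(H). -/
/-!
Along a geodesic of a connected graph with minimum degree `δ` on `n` vertices, the closed
neighbourhoods of vertices three steps apart are disjoint, so the diameter is below
`3n/(δ+1) + 3`. Hence `d = diam G + diam H < 6n/δ + 6` bounds the diameter of `G □ H`, and the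
hypothesis gives `2^(2d+3) ≤ δ`. Deleting fewer than `δ < n` vertices from `G □ H` spares a whole
row, and next to every vertex a whole column, so the rest stays connected: `κ(G □ H) ≥ δ`, and the
CHKT theorem makes `G □ H` Class 0. Since `π(F) ≥ n(F)` always, `n² ≤ π(G) π(H)`.
-/

open Finset

/-- A single pebbling move: remove two pebbles from `u` and add one pebble to an
adjacent vertex `v`. -/
def PebblingStep {V : Type*} [DecidableEq V] (G : SimpleGraph V)
    (C C' : V → ℕ) : Prop :=
  ∃ u v : V, G.Adj u v ∧ 2 ≤ C u ∧
    C' = fun x => if x = u then C u - 2 else if x = v then C x + 1 else C x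

/-- A configuration `C` is `r`-solvable if some sequence of pebbling moves
places a pebble on `r`. -/
def Solvable {V : Type*} [DecidableEq V] (G : SimpleGraph V)
    (C : V → ℕ) (r : V) : Prop :=
  ∃ C' : V → ℕ, Relation.ReflTransGen (PebblingStep G) C C' ∧ 1 ≤ C' r

/-- `p` is the pebbling number of `G`: the least `t` such that every
configuration of `t` pebbles is solvable to every root. -/
def IsPebblingNumber {V : Type*} [Fintype V] [DecidableEq V]
    (G : SimpleGraph V) (p : ℕ) : Prop :=
  IsLeast {t : ℕ | ∀ C : V → ℕ, ∑ v, C v = t → ∀ r : V, Solvable G C r} p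

lemma Set.exists_mem_forall_notMem_of_ncard_lt_card {α β : Type*} {S : Set (α × β)}
    (hS : S.Finite) {t : Finset α} (ht : S.ncard < #t) : ∃ a ∈ t, ∀ b, (a, b) ∉ S := by
  by_contra! h
  have hsub : (t : Set α) ⊆ Prod.fst '' S := fun a ha =>
    let ⟨b, hb⟩ := h a ha
    ⟨(a, b), hb, rfl⟩
  have := (Set.ncard_le_ncard hsub (hS.image _)).trans (Set.ncard_image_le hS)
  rw [Set.ncard_coe_finset] at this
  omega

namespace SimpleGraph

variable {V W : Type*} {G : SimpleGraph V} {H : SimpleGraph W}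

lemma Connected.exists_dist_eq_of_le (hG : G.Connected) {u v : V} {j : ℕ}
    (hj : j ≤ G.dist u v) : ∃ w, G.dist u w = j := by
  obtain ⟨p, hp⟩ := hG.exists_walk_length_eq_dist u v
  have hfirst : G.dist u (p.getVert j) ≤ j := by
    simpa [hp, hj] using G.dist_le (p.take j)
  have hlast : G.dist (p.getVert j) v ≤ p.length - j := by
    simpa using G.dist_le (p.drop j)
  have := hG.dist_triangle (u := u) (v := p.getVert j) (w := v)
  exact ⟨p.getVert j, by omega⟩

section Finite

variable [Fintype V] [DecidableRel G.Adj]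

/-- The closed neighbourhood of a vertex at distance `3k + 2` from `u` lies in the annulus between
radii `3k` and `3k + 3`, so each step of three adds at least `δ + 1` vertices to the ball. -/
lemma mul_minDegree_add_one_lt_card_ball (hG : G.Connected) {u v : V} {k : ℕ}
    (hk : 3 * k ≤ G.dist u v) : k * (G.minDegree + 1) < #{x | G.dist u x ≤ 3 * k} := by
  classical
  induction k with
  | zero => simpa using card_pos.2 ⟨u, by simp⟩
  | succ k ih =>
    obtain ⟨w, hw⟩ := hG.exists_dist_eq_of_le (u := u) (v := v) (j := 3 * k + 2) (by omega)
    set B : Finset V := {x | G.dist u x ≤ 3 * k}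
    set N := insert w (G.neighborFinset w)
    have hN : ∀ x ∈ N, G.dist w x ≤ 1 := by
      simp only [N, mem_insert, mem_neighborFinset]
      rintro x (rfl | hx)
      · simp
      · exact (dist_eq_one_iff_adj.2 hx).le
    have hdisj : Disjoint B N := by
      refine Finset.disjoint_left.2 fun x hx hxN => ?_
      have := hG.dist_triangle (u := u) (v := x) (w := w)
      rw [dist_comm (u := x)] at this
      simp only [B, mem_filter, mem_univ, true_and] at hx
      have := hN x hxN
      omega
    have hsub : B ∪ N ⊆ ({x | G.dist u x ≤ 3 * (k + 1)} : Finset V) := by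
      intro x hx
      simp only [B, mem_union, mem_filter, mem_univ, true_and] at hx ⊢
      have := hG.dist_triangle (u := u) (v := w) (w := x)
      rcases hx with hx | hx
      · omega
      · have := hN x hx
        omega
    have hNcard : G.minDegree + 1 ≤ #N := by
      rw [card_insert_of_notMem (by simp), card_neighborFinset_eq_degree]
      exact Nat.add_le_add_right (G.minDegree_le_degree w) 1
    calc (k + 1) * (G.minDegree + 1)
        = k * (G.minDegree + 1) + (G.minDegree + 1) := by ring
      _ < #B + #N := Nat.add_lt_add_of_lt_of_le (ih (by omega)) hNcard
      _ = #(B ∪ N) := (card_union_of_disjoint hdisj).symm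
      _ ≤ _ := card_le_card hsub

lemma diam_div_three_mul_minDegree_add_one_lt_card (hG : G.Connected) :
    G.diam / 3 * (G.minDegree + 1) < Fintype.card V := by
  have := hG.nonempty
  obtain ⟨u, v, huv⟩ := G.exists_dist_eq_diam
  exact (mul_minDegree_add_one_lt_card_ball hG (u := u) (v := v) (by omega)).trans_le
    (card_le_univ _)

end Finite

lemma diam_boxProd_le (hG : G.ediam ≠ ⊤) (hH : H.ediam ≠ ⊤) :
    (G □ H).diam ≤ G.diam + H.diam := by
  have hle : (G □ H).ediam ≤ G.ediam + H.ediam := ediam_le_iff.2 fun x y => by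
    rw [edist_boxProd]
    exact add_le_add edist_le_ediam edist_le_ediam
  rw [diam, diam, diam, ← ENat.toNat_add hG hH]
  exact ENat.toNat_le_toNat hle (by simp [hG, hH])

section Connectivity

variable {s : Set (V × W)}

lemma Preconnected.reachable_induce_boxProdLeft (hG : G.Preconnected) {b : W}
    (hs : ∀ a, (a, b) ∈ s) (a a' : V) :
    ((G □ H).induce s).Reachable ⟨(a, b), hs a⟩ ⟨(a', b), hs a'⟩ := by
  obtain ⟨p⟩ := hG a a'
  exact ⟨(p.map (G.boxProdLeft H b).toHom).induce s (by simp [hs])⟩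

lemma Preconnected.reachable_induce_boxProdRight (hH : H.Preconnected) {a : V}
    (hs : ∀ b, (a, b) ∈ s) (b b' : W) :
    ((G □ H).induce s).Reachable ⟨(a, b), hs b⟩ ⟨(a, b'), hs b'⟩ := by
  obtain ⟨p⟩ := hH b b'
  exact ⟨(p.map (G.boxProdRight H a).toHom).induce s (by simp [hs])⟩

/-- Fewer than `|W|` removed vertices miss a whole row `V × {b₀}`, and fewer than `δ(G)` miss
a whole column `{a} × W` through a neighbour `a` of any given `v`; every surviving vertex `(v, b)`
reaches the free row along the edge to `(a, b)` and then down the free column. -/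
lemma connected_induce_compl_boxProd [Fintype V] [Fintype W] [DecidableRel G.Adj]
    (hG : G.Connected) (hH : H.Connected) {S : Set (V × W)}
    (hSW : S.ncard < Fintype.card W) (hSG : S.ncard < G.minDegree) :
    ((G □ H).induce Sᶜ).Connected := by
  have hSswap : (Prod.swap '' S).ncard < #(univ : Finset W) := by
    rwa [Set.ncard_image_of_injective _ Prod.swap_injective, card_univ]
  obtain ⟨b₀, -, hrow⟩ :=
    Set.exists_mem_forall_notMem_of_ncard_lt_card (S.toFinite.image _) hSswap
  have hrow : ∀ a, (a, b₀) ∈ Sᶜ := fun a ha => hrow a ⟨(a, b₀), ha, rfl⟩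
  obtain ⟨v₀⟩ := hG.nonempty
  refine (connected_iff_exists_forall_reachable _).2 ⟨⟨(v₀, b₀), hrow v₀⟩, ?_⟩
  rintro ⟨⟨v, b⟩, hvb⟩
  have hdeg : S.ncard < #(G.neighborFinset v) :=
    hSG.trans_le ((G.minDegree_le_degree v).trans_eq (G.card_neighborFinset_eq_degree v).symm)
  obtain ⟨a, hav, hcol⟩ := Set.exists_mem_forall_notMem_of_ncard_lt_card S.toFinite hdeg
  have hcol : ∀ b, (a, b) ∈ Sᶜ := hcol
  have hedge : ((G □ H).induce Sᶜ).Adj ⟨(a, b), hcol b⟩ ⟨(v, b), hvb⟩ :=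
    boxProd_adj.2 (Or.inl ⟨((G.mem_neighborFinset v a).1 hav).symm, rfl⟩)
  exact (hG.preconnected.reachable_induce_boxProdLeft hrow v₀ a).trans
    ((hH.preconnected.reachable_induce_boxProdRight hcol b₀ b).trans hedge.reachable)

lemma hasConnectivityAtLeast_boxProd [Fintype V] [Fintype W] [DecidableRel G.Adj]
    (hG : G.Connected) (hH : H.Connected) :
    HasConnectivityAtLeast (G □ H) (min (Fintype.card W) G.minDegree) := by
  intro S hS
  by_contra! hlt
  exact hS (connected_induce_compl_boxProd hG hH (lt_min_iff.1 hlt).1 (lt_min_iff.1 hlt).2)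

end Connectivity

end SimpleGraph

lemma HasConnectivityAtLeast.mono {V : Type*} {G : SimpleGraph V} {k l : ℕ}
    (h : HasConnectivityAtLeast G l) (hkl : k ≤ l) : HasConnectivityAtLeast G k :=
  fun S hS => hkl.trans (h S hS)

lemma Solvable.one_le_of_forall_le_one {V : Type*} [DecidableEq V] {G : SimpleGraph V}
    {C : V → ℕ} {r : V} (h : Solvable G C r) (hC : ∀ v, C v ≤ 1) : 1 ≤ C r := by
  obtain ⟨C', hCC', hr⟩ := h
  rcases hCC'.cases_head with rfl | ⟨_, ⟨u, _, _, hu, _⟩, _⟩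
  · exact hr
  · have := hC u
    omega

/-- One pebble on each of `p < |V|` vertices other than `r` admits no move and misses `r`. -/
lemma IsPebblingNumber.card_le {V : Type*} [Fintype V] [DecidableEq V] {G : SimpleGraph V}
    {p : ℕ} (h : IsPebblingNumber G p) : Fintype.card V ≤ p := by
  by_contra! hp
  obtain ⟨r⟩ : Nonempty V := Fintype.card_pos_iff.1 (by omega)
  obtain ⟨T, hT, hTcard⟩ := exists_subset_card_eq (s := univ.erase r) (n := p)
    (by rw [card_erase_of_mem (mem_univ r), card_univ]; omega)
  have hrT : r ∉ T := fun hr => (mem_erase.1 (hT hr)).1 rfl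
  have := (h.1 (fun v => if v ∈ T then 1 else 0) (by simp [sum_ite_mem, hTcard]) r)
    |>.one_le_of_forall_le_one fun v => by split_ifs <;> simp
  simp [hrT] at this

lemma two_pow_le_of_two_rpow_le {n δ a b : ℕ} (ha : a / 3 * δ ≤ n) (hb : b / 3 * δ ≤ n)
    (h : (2 : ℝ) ^ ((12 * n : ℝ) / δ + 15) ≤ δ) : 2 ^ (2 * (a + b) + 3) ≤ δ := by
  have hδ : 0 < δ := by
    rcases Nat.eq_zero_or_pos δ with rfl | hδ
    · exact absurd h (by simp only [Nat.cast_zero, not_le]; positivity)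
    · exact hδ
  have ha' : ((a / 3 : ℕ) : ℝ) ≤ n / δ := by
    rw [le_div_iff₀ (by positivity)]
    exact_mod_cast ha
  have hb' : ((b / 3 : ℕ) : ℝ) ≤ n / δ := by
    rw [le_div_iff₀ (by positivity)]
    exact_mod_cast hb
  have hexp : ((2 * (a + b) + 3 : ℕ) : ℝ) ≤ (12 * n : ℝ) / δ + 15 :=
    calc ((2 * (a + b) + 3 : ℕ) : ℝ) ≤ 6 * (((a / 3 : ℕ) : ℝ) + ((b / 3 : ℕ) : ℝ)) + 11 := by
          exact_mod_cast (by omega : 2 * (a + b) + 3 ≤ 6 * (a / 3 + b / 3) + 11)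
      _ ≤ (12 * n : ℝ) / δ + 15 := by rw [mul_div_assoc]; linarith
  exact_mod_cast (Real.rpow_natCast 2 _ ▸ Real.rpow_le_rpow_of_exponent_le one_le_two hexp).trans h

/-- If `G` and `H` are connected graphs on `n` vertices each with
`δ = min{δ(G), δ(H)}` satisfying `δ ≥ 2^(12n/δ + 15)`, then, assuming the
Czygrinow–Hurlbert–Kierstead–Trotter theorem (every graph of diameter at most `d`
and connectivity at least `2^(2d+3)` is Class 0), the product `G □ H` is Class 0,
i.e. `π(G □ H) = n²`, and hence `π(G □ H) ≤ π(G)·π(H)`. -/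
theorem boxProd_class0_of_minDegree {V W : Type} [Fintype V] [Fintype W]
    [DecidableEq V] [DecidableEq W]
    (G : SimpleGraph V) (H : SimpleGraph W)
    [DecidableRel G.Adj] [DecidableRel H.Adj]
    (hG : G.Connected) (hH : H.Connected)
    (n : ℕ) (hnV : Fintype.card V = n) (hnW : Fintype.card W = n)
    (δ : ℕ) (hδ : δ = min G.minDegree H.minDegree)
    (hbig : (2 : ℝ) ^ ((12 * n : ℝ) / (δ : ℝ) + 15) ≤ (δ : ℝ))
    (CHKT : ∀ (U : Type) (_ : Fintype U) (_ : DecidableEq U)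
      (F : SimpleGraph U) (d : ℕ), F.Connected → F.diam ≤ d →
      HasConnectivityAtLeast F (2 ^ (2 * d + 3)) →
      IsPebblingNumber F (Fintype.card U)) :
    IsPebblingNumber (G.boxProd H) (n ^ 2) ∧
    (∀ q pG pH : ℕ, IsPebblingNumber (G.boxProd H) q →
      IsPebblingNumber G pG → IsPebblingNumber H pH → q ≤ pG * pH) := by
  have := hG.nonempty
  have := hH.nonempty
  have hδG : δ ≤ G.minDegree := hδ ▸ min_le_left _ _
  have hδH : δ ≤ H.minDegree := hδ ▸ min_le_right _ _
  have hδW : δ ≤ Fintype.card W := (hδH.trans_lt H.minDegree_lt_card).le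
  have hdiamG : G.diam / 3 * δ ≤ n := hnV ▸ ((Nat.mul_le_mul_left _ (by omega)).trans
    (SimpleGraph.diam_div_three_mul_minDegree_add_one_lt_card hG).le)
  have hdiamH : H.diam / 3 * δ ≤ n := hnW ▸ ((Nat.mul_le_mul_left _ (by omega)).trans
    (SimpleGraph.diam_div_three_mul_minDegree_add_one_lt_card hH).le)
  have hpow : 2 ^ (2 * (G.diam + H.diam) + 3) ≤ δ := two_pow_le_of_two_rpow_le hdiamG hdiamH hbig
  have hclass0 : IsPebblingNumber (G □ H) (n ^ 2) := by
    have := CHKT (V × W) inferInstance inferInstance (G □ H) (G.diam + H.diam) (hG.boxProd hH)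
      (SimpleGraph.diam_boxProd_le (G.connected_iff_ediam_ne_top.1 hG)
        (H.connected_iff_ediam_ne_top.1 hH))
      ((SimpleGraph.hasConnectivityAtLeast_boxProd hG hH).mono
        (le_min (hpow.trans hδW) (hpow.trans hδG)))
    rwa [Fintype.card_prod, hnV, hnW, ← sq] at this
  refine ⟨hclass0, fun q pG pH hq hpG hpH => ?_⟩
  rw [hq.unique hclass0, sq]
  exact Nat.mul_le_mul (hnV ▸ hpG.card_le) (hnW ▸ hpH.card_le)
end

section
/- For every k ≥ 3, the pebbling number of the cycle C_k on k vertices is at least 2^{⌊k/2⌋}; consequently, any Class 0 graph on n vertices has girth at most 2·log₂(n) + O(1). -/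
/-!
Weight argument: for vertices `r, v` with `d = dist r v`, let a pebble on `x` weigh
`2 ^ (d - dist r x)`. A move removes two pebbles of weight `w` and adds one of weight at most
`2 w`, so the total weight never increases. The `2 ^ d - 1` pebbles on `v` weigh `2 ^ d - 1`,
while a single pebble on `r` weighs `2 ^ d`; hence `π(G) ≥ 2 ^ dist r v` for all `r, v`.

In the cycle `C_k` the vertices `0` and `⌊k/2⌋` are at distance `⌊k/2⌋`. In a general graph of
girth `g`, two vertices `⌊g/2⌋` apart along a shortest cycle are at distance `⌊g/2⌋`: a shorter
path would close up with an arc of the cycle into a cycle shorter than `g`. So a Class 0 graph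
on `n` vertices has `2 ^ ⌊g/2⌋ ≤ n`, i.e. `g ≤ 2 log₂ n + 1`.
-/

open Finset

open SimpleGraph

section Pebbling

variable {V : Type*} [DecidableEq V] {G : SimpleGraph V}

-- Truncated subtraction gives every vertex farther than `d` from `r` weight `1`; moves still
-- cannot increase the weight, since `dist r` changes by at most one along an edge.
noncomputable def pebblingWeight [Fintype V] (G : SimpleGraph V) (r : V) (d : ℕ)
    (C : V → ℕ) : ℕ :=
  ∑ x, C x * 2 ^ (d - G.dist r x)

lemma PebblingStep.pebblingWeight_le [Fintype V] {A B : V → ℕ} (h : PebblingStep G A B)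
    (r : V) (d : ℕ) : pebblingWeight G r d B ≤ pebblingWeight G r d A := by
  obtain ⟨u, v, huv, hu, rfl⟩ := h
  set w : V → ℕ := fun x => 2 ^ (d - G.dist r x)
  change ∑ x, (if x = u then A u - 2 else if x = v then A x + 1 else A x) * w x
    ≤ ∑ x, A x * w x
  have hwv : w v ≤ 2 * w u := by
    have : d - G.dist r v ≤ d - G.dist r u + 1 := by
      rcases huv.diff_dist_adj (u := r) with h | h | h <;> omega
    calc w v ≤ 2 ^ (d - G.dist r u + 1) := Nat.pow_le_pow_right two_pos this
      _ = 2 * w u := by rw [pow_succ, mul_comm]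
  have hpt : ∀ x, (if x = u then A u - 2 else if x = v then A x + 1 else A x) * w x
      + (if x = u then 2 * w u else 0) = A x * w x + (if x = v then w v else 0) := by
    intro x
    rcases eq_or_ne x u with rfl | hxu
    · simp [huv.ne, ← add_mul, Nat.sub_add_cancel hu]
    · by_cases hxv : x = v
      · subst hxv; simp [hxu, add_mul]
      · simp [hxu, hxv]
  have hsum := Finset.sum_congr rfl fun x (_ : x ∈ Finset.univ) => hpt x
  simp only [Finset.sum_add_distrib, Finset.sum_ite_eq', Finset.mem_univ, if_true] at hsum
  omega

lemma pebblingWeight_le_of_reflTransGen [Fintype V] {A B : V → ℕ}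
    (h : Relation.ReflTransGen (PebblingStep G) A B) (r : V) (d : ℕ) :
    pebblingWeight G r d B ≤ pebblingWeight G r d A := by
  induction h with
  | refl => exact le_rfl
  | tail _ hstep ih => exact (hstep.pebblingWeight_le r d).trans ih

lemma not_solvable_two_pow_dist_sub_one [Fintype V] (r v : V) :
    ¬ Solvable G (fun x => if x = v then 2 ^ G.dist r v - 1 else 0) r := by
  rintro ⟨C, hmoves, hr⟩
  set d := G.dist r v
  have hstart : pebblingWeight G r d (fun x => if x = v then 2 ^ d - 1 else 0) = 2 ^ d - 1 := by
    simp [pebblingWeight, d]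
  have hend : 2 ^ d ≤ pebblingWeight G r d C :=
    calc 2 ^ d ≤ C r * 2 ^ (d - G.dist r r) := by simpa using Nat.le_mul_of_pos_left (2 ^ d) hr
      _ ≤ pebblingWeight G r d C :=
        Finset.single_le_sum (f := fun x => C x * 2 ^ (d - G.dist r x))
          (fun _ _ => Nat.zero_le _) (Finset.mem_univ r)
  have := pebblingWeight_le_of_reflTransGen hmoves r d
  have := Nat.one_le_two_pow (n := d)
  omega

lemma PebblingStep.exists_of_le {A A' B : V → ℕ} (h : PebblingStep G A B) (hA : A ≤ A') :
    ∃ B', PebblingStep G A' B' ∧ B ≤ B' := by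
  obtain ⟨u, v, huv, hu, rfl⟩ := h
  refine ⟨_, ⟨u, v, huv, hu.trans (hA u), rfl⟩, fun x => ?_⟩
  have hx : A x ≤ A' x := hA x
  have hu' : A u ≤ A' u := hA u
  dsimp only
  split_ifs <;> omega

lemma Relation.ReflTransGen.exists_pebblingStep_of_le {A A' B : V → ℕ}
    (h : Relation.ReflTransGen (PebblingStep G) A B) (hA : A ≤ A') :
    ∃ B', Relation.ReflTransGen (PebblingStep G) A' B' ∧ B ≤ B' := by
  induction h with
  | refl => exact ⟨A', .refl, hA⟩
  | tail _ hstep ih =>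
    obtain ⟨B₁, hB₁, hle₁⟩ := ih
    obtain ⟨B₂, hstep₂, hle₂⟩ := hstep.exists_of_le hle₁
    exact ⟨B₂, hB₁.tail hstep₂, hle₂⟩

lemma Solvable.mono {C D : V → ℕ} {r : V} (h : Solvable G C r) (hCD : C ≤ D) :
    Solvable G D r := by
  obtain ⟨C', hmoves, hr⟩ := h
  obtain ⟨D', hD', hle⟩ := hmoves.exists_pebblingStep_of_le hCD
  exact ⟨D', hD', hr.trans (hle r)⟩

lemma IsPebblingNumber.two_pow_dist_le [Fintype V] {p : ℕ} (hp : IsPebblingNumber G p)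
    (r v : V) : 2 ^ G.dist r v ≤ p := by
  by_contra! hlt
  have hsolv : Solvable G (fun x => if x = v then p else 0) r :=
    hp.1 _ (by simp) r
  refine not_solvable_two_pow_dist_sub_one r v (hsolv.mono fun x => ?_)
  dsimp only
  split_ifs <;> omega

end Pebbling

namespace SimpleGraph

variable {V : Type*} {G : SimpleGraph V} {u v : V}

lemma Walk.le_add_length_of_adj_le {f : V → ℕ} (hf : ∀ a b, G.Adj a b → f b ≤ f a + 1)
    (p : G.Walk u v) : f v ≤ f u + p.length := by
  induction p with
  | nil => simp
  | cons h _ ih =>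
    have := hf _ _ h
    rw [Walk.length_cons]
    omega

lemma Reachable.le_add_dist_of_adj_le {f : V → ℕ} (hf : ∀ a b, G.Adj a b → f b ≤ f a + 1)
    (h : G.Reachable u v) : f v ≤ f u + G.dist u v := by
  obtain ⟨p, hp⟩ := h.exists_walk_length_eq_dist
  exact hp ▸ p.le_add_length_of_adj_le hf

lemma min_le_cycleGraph_dist {n : ℕ} (v : Fin (n + 1)) :
    min v.val (n + 1 - v.val) ≤ (cycleGraph (n + 1)).dist 0 v := by
  have hf : ∀ a b : Fin (n + 1), (cycleGraph (n + 1)).Adj a b →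
      min b.val (n + 1 - b.val) ≤ min a.val (n + 1 - a.val) + 1 := by
    intro a b hab
    rw [cycleGraph_adj'] at hab
    have := a.isLt
    have := b.isLt
    rcases lt_trichotomy a b with h | rfl | h
    · rw [Fin.coe_sub_iff_lt.mpr h, Fin.coe_sub_iff_le.mpr h.le] at hab
      omega
    · simp
    · rw [Fin.coe_sub_iff_le.mpr h.le, Fin.coe_sub_iff_lt.mpr h] at hab
      omega
  simpa using (cycleGraph_connected.preconnected 0 v).le_add_dist_of_adj_le hf

lemma girth_le_length_add_one_of_not_mem_edges (h : G.Adj u v) (p : G.Walk v u)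
    (hp : s(u, v) ∉ p.edges) : G.girth ≤ p.length + 1 := by
  classical
  have hc : (Walk.cons h p.bypass).IsCycle :=
    (Walk.cons_isCycle_iff _ h).mpr
      ⟨p.bypass_isPath, fun he => hp (p.edges_bypass_subset_edges he)⟩
  calc G.girth ≤ (Walk.cons h p.bypass).length := girth_le_length hc
    _ ≤ p.length + 1 := by simpa using p.length_bypass_le_length

lemma girth_le_length_add_length_of_mem_edges {e : Sym2 V} {q p : G.Walk u v} (hq : q.IsTrail)
    (heq : e ∈ q.edges) (hep : e ∉ p.edges) : G.girth ≤ q.length + p.length := by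
  induction q with
  | nil => simp at heq
  | @cons a b _ h q ih =>
    rw [Walk.edges_cons, List.mem_cons] at heq
    rw [Walk.isTrail_cons] at hq
    rcases heq with rfl | heq
    · have := girth_le_length_add_one_of_not_mem_edges h (q.append p.reverse) (by simp [hq.2, hep])
      simp only [Walk.length_append, Walk.length_reverse] at this
      simp only [Walk.length_cons]
      omega
    · have hne : e ≠ s(b, a) := by
        rintro rfl
        rw [Sym2.eq_swap] at heq
        exact hq.2 heq
      have := ih hq.1 heq (p := Walk.cons h.symm p) (by simp [hne, hep])
      simp only [Walk.length_cons] at this ⊢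
      omega

lemma min_length_le_dist_of_isCycle_append (w₁ : G.Walk u v) (w₂ : G.Walk v u)
    (hc : (w₁.append w₂).IsCycle) (hg : (w₁.append w₂).length = G.girth) :
    min w₁.length w₂.length ≤ G.dist u v := by
  classical
  by_contra! hlt
  obtain ⟨p, hp⟩ := w₁.reachable.exists_walk_length_eq_dist
  have hw₁ : w₁.IsTrail := hc.isTrail.of_append_left
  obtain ⟨e, he₁, hep⟩ : ∃ e ∈ w₁.edges, e ∉ p.edges := by
    by_contra! hsub
    have := (List.subperm_of_subset hw₁.edges_nodup hsub).length_le
    simp only [Walk.length_edges] at this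
    omega
  have := girth_le_length_add_length_of_mem_edges hw₁ he₁ hep
  rw [Walk.length_append] at hg
  omega

lemma exists_girth_div_two_le_dist (h : ¬ G.IsAcyclic) : ∃ u v, G.girth / 2 ≤ G.dist u v := by
  obtain ⟨u, c, hc, hg⟩ := exists_girth_eq_length.mpr h
  refine ⟨u, c.getVert (G.girth / 2), ?_⟩
  have := min_length_le_dist_of_isCycle_append (c.take (G.girth / 2)) (c.drop (G.girth / 2))
    (by rwa [Walk.append_take_drop_eq]) (by rw [Walk.append_take_drop_eq, hg])
  simp only [Walk.take_length, Walk.drop_length] at this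
  omega

end SimpleGraph

lemma IsPebblingNumber.two_pow_girth_div_two_le {V : Type*} [Fintype V] [DecidableEq V]
    {G : SimpleGraph V} {p : ℕ} (hp : IsPebblingNumber G p) (h : ¬ G.IsAcyclic) :
    2 ^ (G.girth / 2) ≤ p := by
  obtain ⟨u, v, huv⟩ := exists_girth_div_two_le_dist h
  exact (Nat.pow_le_pow_right two_pos huv).trans (hp.two_pow_dist_le u v)

/-- For every `k ≥ 3`, placing `2^⌊k/2⌋ - 1` pebbles on a vertex of the cycle
`C_k` at distance `⌊k/2⌋` from the root is unsolvable, so `π(C_k) ≥ 2^⌊k/2⌋`;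
consequently every Class 0 graph on `n` vertices containing a cycle has girth
at most `2·log₂ n + O(1)`. -/
theorem cycle_pebbling_and_class0_girth :
    (∀ k : ℕ, 3 ≤ k →
      (∀ r v : Fin k, (SimpleGraph.cycleGraph k).dist r v = k / 2 →
        ¬ Solvable (SimpleGraph.cycleGraph k)
          (fun x => if x = v then 2 ^ (k / 2) - 1 else 0) r) ∧
      (∀ p : ℕ, IsPebblingNumber (SimpleGraph.cycleGraph k) p →
        2 ^ (k / 2) ≤ p)) ∧
    (∃ K : ℕ, ∀ (V : Type) (_ : Fintype V) (_ : DecidableEq V)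
      (G : SimpleGraph V), G.Connected →
      IsPebblingNumber G (Fintype.card V) → G.egirth ≠ ⊤ →
      G.girth ≤ 2 * Nat.log 2 (Fintype.card V) + K) := by
  refine ⟨fun k hk => ⟨fun r v hdist => ?_, fun p hp => ?_⟩,
    ⟨1, fun V _ _ G _ hp hcyc => ?_⟩⟩
  · simpa [hdist] using not_solvable_two_pow_dist_sub_one (G := cycleGraph k) r v
  · obtain ⟨n, rfl⟩ : ∃ n, k = n + 1 := ⟨k - 1, by omega⟩
    have hdist := min_le_cycleGraph_dist (n := n) ⟨(n + 1) / 2, by omega⟩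
    rw [Fin.val_mk, min_eq_left (show (n + 1) / 2 ≤ n + 1 - (n + 1) / 2 by omega)] at hdist
    exact (Nat.pow_le_pow_right two_pos hdist).trans (hp.two_pow_dist_le _ _)
  · have h := hp.two_pow_girth_div_two_le fun h => hcyc (egirth_eq_top.mpr h)
    have hcard : Fintype.card V ≠ 0 := Nat.one_le_iff_ne_zero.mp (Nat.one_le_two_pow.trans h)
    have := (Nat.le_log_iff_pow_le one_lt_two hcard).mpr h
    omega
end
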